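/- With $\overline{\phi} = \mathrm{ind}_{W_E}^{W_F}\,\xi$ irreducible as above and $\phi = \mathrm{pr} \circ \overline{\phi}$ the composition with the projection $GL_n(\mathbb{C}) \to PGL_n(\mathbb{C})$ (where $n = [W_F : W_E]$), one has $\ker\phi = \{w \in W_E : \xi^s(w) = \xi(w) \text{ for all } s \in W_F\}$. -/

import Mathlib

variable {WF : Type*} [Group WF]

/-- The space of the representation of `WF` induced from the character `ξ` of the
subgroup `WE`: functions `f : WF → ℂ` with `f(e x) = ξ(e) f(x)` for `e ∈ WE`. -/
noncomputable def IndSpace (WE : Subgroup WF) (ξ : WE →* ℂˣ) : Submodule ℂ (WF → ℂ) where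
  carrier := {f | ∀ (e : WE) (x : WF), f ((e : WF) * x) = (ξ e : ℂ) * f x}
  add_mem' := by
    intro f g hf hg e x
    simp only [Pi.add_apply, hf e x, hg e x, mul_add]
  zero_mem' := by intro e x; simp
  smul_mem' := by
    intro c f hf e x
    simp only [Pi.smul_apply, smul_eq_mul, hf e x]
    ring

/-- The induced representation `ind_{WE}^{WF} ξ`, acting by right translation. -/
noncomputable def indRep (WE : Subgroup WF) (ξ : WE →* ℂˣ) :
    Representation ℂ WF (IndSpace WE ξ) where
  toFun g :=
    { toFun := fun f => ⟨fun x => (f : WF → ℂ) (x * g), by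
        intro e x
        simpa [mul_assoc] using f.2 e (x * g)⟩
      map_add' := by intro f1 f2; apply Subtype.ext; funext x; simp
      map_smul' := by intro c f; apply Subtype.ext; funext x; simp }
  map_one' := by apply LinearMap.ext; intro f; apply Subtype.ext; funext x; simp
  map_mul' g h := by
    apply LinearMap.ext; intro f; apply Subtype.ext; funext x
    simp [mul_assoc]

namespace IndSpace

variable {WE : Subgroup WF} {ξ : WE →* ℂˣ}

lemma apply_mul_of_conj_mem (f : IndSpace WE ξ) {x w : WF} (h : x * w * x⁻¹ ∈ WE) :
    (f : WF → ℂ) (x * w) = ξ ⟨x * w * x⁻¹, h⟩ * (f : WF → ℂ) x := by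
  rw [← f.2 ⟨x * w * x⁻¹, h⟩ x, inv_mul_cancel_right]

open scoped Classical in
variable (WE ξ) in
noncomputable def cosetFun (s : WF) : IndSpace WE ξ :=
  ⟨fun x => if h : x * s ∈ WE then (ξ ⟨x * s, h⟩ : ℂ) else 0, by
    intro e x
    simp only [mul_assoc, Subgroup.mul_mem_cancel_left WE e.2]
    split_ifs with h
    · rw [← Units.val_mul, ← map_mul]
      rfl
    · rw [mul_zero]⟩

open scoped Classical in
lemma cosetFun_apply (s x : WF) :
    (cosetFun WE ξ s : WF → ℂ) x = if h : x * s ∈ WE then (ξ ⟨x * s, h⟩ : ℂ) else 0 :=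
  rfl

lemma cosetFun_apply_inv (s : WF) : (cosetFun WE ξ s : WF → ℂ) s⁻¹ = 1 := by
  have h1 : s⁻¹ * s ∈ WE := by simp [WE.one_mem]
  rw [cosetFun_apply, dif_pos h1, show (⟨s⁻¹ * s, h1⟩ : WE) = 1 from Subtype.ext (inv_mul_cancel s),
    map_one, Units.val_one]

end IndSpace

section

variable {WE : Subgroup WF} {ξ : WE →* ℂˣ}

@[simp]
lemma indRep_apply_apply (g : WF) (f : IndSpace WE ξ) (x : WF) :
    (indRep WE ξ g f : WF → ℂ) x = (f : WF → ℂ) (x * g) :=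
  rfl

/-- Testing a scalar `indRep WE ξ w` on `IndSpace.cosetFun WE ξ s` at `s⁻¹` reads off the
scalar as `ξ (s⁻¹ * w * s)`. -/
lemma conj_mem_of_indRep_eq_smul {w : WF} {c : ℂˣ}
    (hc : indRep WE ξ w = (c : ℂ) • LinearMap.id) (s : WF) :
    ∃ hs : s⁻¹ * w * s ∈ WE, (ξ ⟨s⁻¹ * w * s, hs⟩ : ℂ) = c := by
  have key := congrArg (fun T => (T (IndSpace.cosetFun WE ξ s) : WF → ℂ) s⁻¹) hc
  simp only [indRep_apply_apply, LinearMap.smul_apply, LinearMap.id_apply,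
    Submodule.coe_smul, Pi.smul_apply, smul_eq_mul, IndSpace.cosetFun_apply_inv, mul_one] at key
  rw [IndSpace.cosetFun_apply] at key
  split_ifs at key with hs
  · exact ⟨hs, key⟩
  · exact absurd key.symm c.ne_zero

lemma indRep_eq_smul_of_conj_invariant {w : WF} (hw : w ∈ WE)
    (h : ∀ s : WF, ∃ hs : s⁻¹ * w * s ∈ WE, ξ ⟨s⁻¹ * w * s, hs⟩ = ξ ⟨w, hw⟩) :
    indRep WE ξ w = (ξ ⟨w, hw⟩ : ℂ) • LinearMap.id := by
  ext f x
  obtain ⟨hs, hξ⟩ := h x⁻¹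
  simp only [inv_inv] at hs hξ
  simp [IndSpace.apply_mul_of_conj_mem f hs, hξ]

end

theorem stmt6_general (WE : Subgroup WF) (ξ : WE →* ℂˣ) :
    ∀ w : WF, (∃ c : ℂˣ, indRep WE ξ w = (c : ℂ) • (LinearMap.id : IndSpace WE ξ →ₗ[ℂ] IndSpace WE ξ)) ↔
      ∃ hw : w ∈ WE, ∀ s : WF, ∃ hs : s⁻¹ * w * s ∈ WE,
        ξ ⟨s⁻¹ * w * s, hs⟩ = ξ ⟨w, hw⟩ := by
  intro w
  constructor
  · rintro ⟨c, hc⟩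
    obtain ⟨hw, hξw⟩ : ∃ hw : w ∈ WE, (ξ ⟨w, hw⟩ : ℂ) = c := by
      simpa using conj_mem_of_indRep_eq_smul hc 1
    refine ⟨hw, fun s => ?_⟩
    obtain ⟨hs, hξs⟩ := conj_mem_of_indRep_eq_smul hc s
    exact ⟨hs, Units.ext (hξs.trans hξw.symm)⟩
  · rintro ⟨hw, h⟩
    exact ⟨ξ ⟨w, hw⟩, indRep_eq_smul_of_conj_invariant hw h⟩

/-- With `φ̄ = ind_{WE}^{WF} ξ` irreducible and `φ = pr ∘ φ̄` the composition with the
projection `GL_n(ℂ) → PGL_n(ℂ)` (`n = [WF : WE]`), an element lies in `ker φ` iff `φ̄`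
maps it to a scalar; this happens exactly for `w ∈ WE` with `ξ(s⁻¹ w s) = ξ(w)` for all
`s ∈ WF`. -/
theorem stmt6 (WE : Subgroup WF) [WE.FiniteIndex] (ξ : WE →* ℂˣ)
    (hirr : ∀ U : Submodule ℂ (IndSpace WE ξ),
      (∀ (g : WF) (f : IndSpace WE ξ), f ∈ U → indRep WE ξ g f ∈ U) → U = ⊥ ∨ U = ⊤) :
    ∀ w : WF, (∃ c : ℂˣ, indRep WE ξ w = (c : ℂ) • (LinearMap.id : IndSpace WE ξ →ₗ[ℂ] IndSpace WE ξ)) ↔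
      ∃ hw : w ∈ WE, ∀ s : WF, ∃ hs : s⁻¹ * w * s ∈ WE,
        ξ ⟨s⁻¹ * w * s, hs⟩ = ξ ⟨w, hw⟩ :=
  stmt6_general WE ξ
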